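/- For λ ∈ ℝ, the Macdonald function K_λ(x) = (1/2)(x/2)^λ ∫₀^∞ e^{−t} e^{−x²/(4t)} t^{−1−λ} dt satisfies: the function r ↦ K_λ(e^{−r}) is a λ²-eigenfunction of the Toda Hamiltonian d²/dr² − e^{−2r}, i.e. (d²/dr²) K_λ(e^{−r}) − e^{−2r} K_λ(e^{−r}) = λ² K_λ(e^{−r}) for all r ∈ ℝ. In particular K₀(e^{−r}) is a positive ground state: (d²/dr²) K₀(e^{−r}) = e^{−2r} K₀(e^{−r}). -/

import Mathlib

open Real MeasureTheory

noncomputable section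

/-- The Macdonald function (modified Bessel function of the second kind)
`K_λ(x) = ½ (x/2)^λ ∫₀^∞ e^{−t} e^{−x²/(4t)} t^{−1−λ} dt`. -/
def macdonaldK (lam x : ℝ) : ℝ :=
  (1 / 2) * (x / 2) ^ lam *
    ∫ t in Set.Ioi (0 : ℝ), Real.exp (-t) * Real.exp (-x ^ 2 / (4 * t)) * t ^ (-1 - lam)

open Set Filter Topology

/-! ### Elementary bounds -/

lemma sq_div_eight_le_cosh (u : ℝ) : u ^ 2 / 8 ≤ Real.cosh u := by
  have h1 : Real.exp |u| ≤ 2 * Real.cosh u := by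
    rcases abs_cases u with ⟨h, _⟩ | ⟨h, _⟩ <;> rw [h, Real.cosh_eq] <;>
      nlinarith [Real.exp_pos u, Real.exp_pos (-u)]
  have h4 : Real.exp (|u| / 2) ^ 2 = Real.exp |u| := by
    rw [sq, ← Real.exp_add, add_halves]
  have h3 := Real.add_one_le_exp (|u| / 2)
  nlinarith [sq_abs u, abs_nonneg u, Real.exp_pos (|u| / 2)]

lemma key_bound (a b : ℝ) (ha : 0 < a) (u : ℝ) :
    b * |u| - a * Real.cosh u ≤ 2 * (|b| + 1) ^ 2 / a - |u| := by
  have h := sq_div_eight_le_cosh u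
  have hb : b * |u| ≤ |b| * |u| := mul_le_mul_of_nonneg_right (le_abs_self b) (abs_nonneg u)
  have h2 : 8 * a * ((|b| + 1) * |u|) ≤ a ^ 2 * u ^ 2 + 16 * (|b| + 1) ^ 2 := by
    nlinarith [sq_nonneg (a * |u| - 4 * (|b| + 1)), sq_abs u]
  have key : (|b| + 1) * |u| ≤ a * (u ^ 2 / 8) + 2 * (|b| + 1) ^ 2 / a := by
    have h8a : (0:ℝ) < 8 * a := by linarith
    calc (|b| + 1) * |u| = 8 * a * ((|b| + 1) * |u|) / (8 * a) := by field_simp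
      _ ≤ (a ^ 2 * u ^ 2 + 16 * (|b| + 1) ^ 2) / (8 * a) := by
          exact (div_le_div_iff_of_pos_right h8a).mpr h2
      _ = a * (u ^ 2 / 8) + 2 * (|b| + 1) ^ 2 / a := by field_simp; ring
  nlinarith [mul_le_mul_of_nonneg_left h ha.le]

lemma integrable_exp_neg_abs' : Integrable (fun u : ℝ => Real.exp (-|u|)) := by
  rw [← integrableOn_univ, ← Set.Iic_union_Ioi (a := (0:ℝ)), integrableOn_union]
  constructor
  · exact (integrableOn_exp_Iic 0).congr_fun
      (fun x hx => by rw [abs_of_nonpos (mem_Iic.mp hx), neg_neg]) measurableSet_Iic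
  · exact (exp_neg_integrableOn_Ioi 0 one_pos).congr_fun
      (fun x hx => by dsimp only; rw [neg_one_mul, abs_of_pos (mem_Ioi.mp hx)]) measurableSet_Ioi

lemma cosh_le_exp_abs (u : ℝ) : Real.cosh u ≤ Real.exp |u| := by
  rw [Real.cosh_eq]
  rcases abs_cases u with ⟨h, hu⟩ | ⟨h, hu⟩ <;> rw [h]
  · nlinarith [Real.exp_le_exp.mpr (by linarith : -u ≤ u)]
  · nlinarith [Real.exp_le_exp.mpr (by linarith : u ≤ -u)]

lemma abs_sinh_le_cosh (u : ℝ) : |Real.sinh u| ≤ Real.cosh u := by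
  have hc := Real.cosh_pos u
  have hs := Real.cosh_sq u
  refine abs_le.mpr ⟨?_, ?_⟩
  · nlinarith [sq_nonneg (Real.sinh u + Real.cosh u)]
  · nlinarith [sq_nonneg (Real.sinh u - Real.cosh u)]

lemma integrable_cosh_pow_exp (a b : ℝ) (ha : 0 < a) (k : ℕ) :
    Integrable (fun u : ℝ => Real.cosh u ^ k * Real.exp (b * u - a * Real.cosh u)) := by
  have hc : Continuous fun u : ℝ => Real.cosh u ^ k * Real.exp (b * u - a * Real.cosh u) := by
    continuity
  refine ((integrable_exp_neg_abs'.const_mul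
    (Real.exp (2 * (|(|b| + k)| + 1) ^ 2 / a))).mono' hc.aestronglyMeasurable ?_)
  filter_upwards with u
  have h0 : (0:ℝ) ≤ Real.cosh u ^ k * Real.exp (b * u - a * Real.cosh u) :=
    mul_nonneg (pow_nonneg (Real.cosh_pos u).le k) (Real.exp_pos _).le
  rw [Real.norm_eq_abs, abs_of_nonneg h0, ← Real.exp_add]
  have h1 : Real.cosh u ^ k ≤ Real.exp ((k : ℝ) * |u|) := by
    rw [Real.exp_nat_mul]
    exact pow_le_pow_left₀ (Real.cosh_pos u).le (cosh_le_exp_abs u) k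
  calc Real.cosh u ^ k * Real.exp (b * u - a * Real.cosh u)
      ≤ Real.exp ((k : ℝ) * |u|) * Real.exp (b * u - a * Real.cosh u) :=
        mul_le_mul_of_nonneg_right h1 (Real.exp_pos _).le
    _ = Real.exp ((k : ℝ) * |u| + (b * u - a * Real.cosh u)) := (Real.exp_add _ _).symm
    _ ≤ Real.exp (2 * (|(|b| + k)| + 1) ^ 2 / a + -|u|) := by
        apply Real.exp_le_exp.mpr
        have hk := key_bound a (|b| + k) ha u
        have hbu : b * u ≤ |b| * |u| := (le_abs_self _).trans (abs_mul b u).le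
        nlinarith [abs_nonneg u, Nat.cast_nonneg (α := ℝ) k, abs_nonneg b]

lemma integrable_exp_cosh (a b : ℝ) (ha : 0 < a) :
    Integrable (fun u : ℝ => Real.exp (b * u - a * Real.cosh u)) := by
  simpa using integrable_cosh_pow_exp a b ha 0

/-! ### The integral representation over the real line and its derivatives -/

def J (lam r : ℝ) : ℝ := ∫ u : ℝ, Real.exp (-lam * u - Real.exp (-r) * Real.cosh u)

def J1 (lam r : ℝ) : ℝ :=
  ∫ u : ℝ, Real.exp (-r) * Real.cosh u * Real.exp (-lam * u - Real.exp (-r) * Real.cosh u)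

def J2 (lam r : ℝ) : ℝ :=
  ∫ u : ℝ, (Real.exp (-r) ^ 2 * Real.cosh u ^ 2 - Real.exp (-r) * Real.cosh u) *
      Real.exp (-lam * u - Real.exp (-r) * Real.cosh u)

lemma integrable_J (lam r : ℝ) :
    Integrable (fun u : ℝ => Real.exp (-lam * u - Real.exp (-r) * Real.cosh u)) :=
  integrable_exp_cosh _ (-lam) (Real.exp_pos _)

lemma hasDerivAt_inner (lam : ℝ) (u s : ℝ) :
    HasDerivAt (fun s => Real.exp (-lam * u - Real.exp (-s) * Real.cosh u))
      (Real.exp (-s) * Real.cosh u * Real.exp (-lam * u - Real.exp (-s) * Real.cosh u)) s := by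
  have h1 : HasDerivAt (fun s : ℝ => Real.exp (-s)) (-Real.exp (-s)) s := by
    exact ((Real.hasDerivAt_exp (-s)).comp s (hasDerivAt_neg s)).congr_deriv (by ring)
  have h2 : HasDerivAt (fun s : ℝ => -lam * u - Real.exp (-s) * Real.cosh u)
      (Real.exp (-s) * Real.cosh u) s := by
    exact ((hasDerivAt_const s (-lam * u)).sub (h1.mul_const (Real.cosh u))).congr_deriv (by ring)
  have h3 := (Real.hasDerivAt_exp (-lam * u - Real.exp (-s) * Real.cosh u)).comp s h2
  exact h3.congr_deriv (by ring)

lemma exp_inner_le (lam r s u : ℝ) (hs : s ∈ Metric.ball r 1) :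
    Real.exp (-lam * u - Real.exp (-s) * Real.cosh u)
      ≤ Real.exp (-lam * u - Real.exp (-(r + 1)) * Real.cosh u) := by
  have hs' : |s - r| < 1 := by simpa [Real.dist_eq] using hs
  have h1 : Real.exp (-(r + 1)) ≤ Real.exp (-s) :=
    Real.exp_le_exp.mpr (by cases abs_lt.mp hs' with | intro h1 h2 => linarith)
  have := mul_le_mul_of_nonneg_right h1 (Real.cosh_pos u).le
  exact Real.exp_le_exp.mpr (by linarith)

lemma exp_neg_le (r s : ℝ) (hs : s ∈ Metric.ball r 1) : Real.exp (-s) ≤ Real.exp (1 - r) := by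
  have hs' : |s - r| < 1 := by simpa [Real.dist_eq] using hs
  exact Real.exp_le_exp.mpr (by cases abs_lt.mp hs' with | intro h1 h2 => linarith)

lemma hasDerivAt_J (lam r : ℝ) : HasDerivAt (J lam) (J1 lam r) r := by
  have key := hasDerivAt_integral_of_dominated_loc_of_deriv_le
    (F := fun s u => Real.exp (-lam * u - Real.exp (-s) * Real.cosh u))
    (F' := fun s u => Real.exp (-s) * Real.cosh u *
      Real.exp (-lam * u - Real.exp (-s) * Real.cosh u))
    (x₀ := r) (s := Metric.ball r 1)
    (bound := fun u => Real.exp (1 - r) *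
      (Real.cosh u * Real.exp (-lam * u - Real.exp (-(r + 1)) * Real.cosh u)))
    (Metric.ball_mem_nhds r one_pos)
    (Eventually.of_forall fun s => (Continuous.aestronglyMeasurable (by continuity)))
    (integrable_J lam r)
    (Continuous.aestronglyMeasurable (by continuity))
    (Eventually.of_forall fun u => fun s hs => by
      have h0 : (0:ℝ) ≤ Real.exp (-s) * Real.cosh u *
          Real.exp (-lam * u - Real.exp (-s) * Real.cosh u) :=
        mul_nonneg (mul_nonneg (Real.exp_pos _).le (Real.cosh_pos u).le) (Real.exp_pos _).le
      rw [Real.norm_eq_abs, abs_of_nonneg h0]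
      have h1 := exp_neg_le r s hs
      have h2 := exp_inner_le lam r s u hs
      have hc := (Real.cosh_pos u).le
      calc Real.exp (-s) * Real.cosh u * Real.exp (-lam * u - Real.exp (-s) * Real.cosh u)
          ≤ Real.exp (1 - r) * Real.cosh u *
            Real.exp (-lam * u - Real.exp (-(r + 1)) * Real.cosh u) := by
            apply mul_le_mul (mul_le_mul_of_nonneg_right h1 hc) h2 (Real.exp_pos _).le
            positivity
        _ = Real.exp (1 - r) *
            (Real.cosh u * Real.exp (-lam * u - Real.exp (-(r + 1)) * Real.cosh u)) := by ring)
    (by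
      have := (integrable_cosh_pow_exp (Real.exp (-(r + 1))) (-lam) (Real.exp_pos _) 1).const_mul
        (Real.exp (1 - r))
      simpa using this)
    (Eventually.of_forall fun u => fun s _ => hasDerivAt_inner lam u s)
  exact key.2

lemma hasDerivAt_J1 (lam r : ℝ) : HasDerivAt (J1 lam) (J2 lam r) r := by
  have key := hasDerivAt_integral_of_dominated_loc_of_deriv_le
    (F := fun s u => Real.exp (-s) * Real.cosh u *
      Real.exp (-lam * u - Real.exp (-s) * Real.cosh u))
    (F' := fun s u => (Real.exp (-s) ^ 2 * Real.cosh u ^ 2 - Real.exp (-s) * Real.cosh u) *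
      Real.exp (-lam * u - Real.exp (-s) * Real.cosh u))
    (x₀ := r) (s := Metric.ball r 1)
    (bound := fun u => Real.exp (1 - r) ^ 2 *
        (Real.cosh u ^ 2 * Real.exp (-lam * u - Real.exp (-(r + 1)) * Real.cosh u)) +
      Real.exp (1 - r) *
        (Real.cosh u * Real.exp (-lam * u - Real.exp (-(r + 1)) * Real.cosh u)))
    (Metric.ball_mem_nhds r one_pos)
    (Eventually.of_forall fun s => (Continuous.aestronglyMeasurable (by continuity)))
    (by
      have := (integrable_cosh_pow_exp (Real.exp (-r)) (-lam) (Real.exp_pos _) 1).const_mul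
        (Real.exp (-r))
      refine this.congr (Eventually.of_forall fun u => ?_)
      simp; ring)
    (Continuous.aestronglyMeasurable (by continuity))
    (Eventually.of_forall fun u => fun s hs => by
      have h1 := exp_neg_le r s hs
      have h2 := exp_inner_le lam r s u hs
      have hc := (Real.cosh_pos u).le
      have he := (Real.exp_pos (-s)).le
      have hg := (Real.exp_pos (-lam * u - Real.exp (-s) * Real.cosh u)).le
      rw [Real.norm_eq_abs]
      have habs : |(Real.exp (-s) ^ 2 * Real.cosh u ^ 2 - Real.exp (-s) * Real.cosh u) *
          Real.exp (-lam * u - Real.exp (-s) * Real.cosh u)|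
          ≤ (Real.exp (-s) ^ 2 * Real.cosh u ^ 2 + Real.exp (-s) * Real.cosh u) *
            Real.exp (-lam * u - Real.exp (-s) * Real.cosh u) := by
        rw [abs_mul, abs_of_nonneg hg]
        apply mul_le_mul_of_nonneg_right _ hg
        refine (abs_sub _ _).trans ?_
        rw [abs_of_nonneg (by positivity), abs_of_nonneg (by positivity)]
      refine habs.trans ?_
      have k1 : Real.exp (-s) ^ 2 * Real.cosh u ^ 2 *
          Real.exp (-lam * u - Real.exp (-s) * Real.cosh u)
          ≤ Real.exp (1 - r) ^ 2 *
            (Real.cosh u ^ 2 * Real.exp (-lam * u - Real.exp (-(r + 1)) * Real.cosh u)) := by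
        rw [← mul_assoc]
        gcongr
      have k2 : Real.exp (-s) * Real.cosh u *
          Real.exp (-lam * u - Real.exp (-s) * Real.cosh u)
          ≤ Real.exp (1 - r) *
            (Real.cosh u * Real.exp (-lam * u - Real.exp (-(r + 1)) * Real.cosh u)) := by
        rw [← mul_assoc]
        gcongr
      rw [add_mul]; exact add_le_add k1 k2)
    (by
      have i2 := (integrable_cosh_pow_exp (Real.exp (-(r + 1))) (-lam) (Real.exp_pos _) 2).const_mul
        (Real.exp (1 - r) ^ 2)
      have i1 := (integrable_cosh_pow_exp (Real.exp (-(r + 1))) (-lam) (Real.exp_pos _) 1).const_mul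
        (Real.exp (1 - r))
      simpa [Pi.add_def] using i2.add i1)
    (Eventually.of_forall fun u => fun s _ => by
      have h1 : HasDerivAt (fun s : ℝ => Real.exp (-s)) (-Real.exp (-s)) s := by
        exact ((Real.hasDerivAt_exp (-s)).comp s (hasDerivAt_neg s)).congr_deriv (by ring)
      have h2 : HasDerivAt (fun s : ℝ => Real.exp (-s) * Real.cosh u)
          (-Real.exp (-s) * Real.cosh u) s := h1.mul_const _
      have h3 := h2.mul (hasDerivAt_inner lam u s)
      exact h3.congr_deriv (by ring))
  exact key.2

/-! ### The integration-by-parts identity -/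

lemma toda_integrand_deriv (lam x : ℝ) (u : ℝ) :
    HasDerivAt (fun u => (lam - x * Real.sinh u) * Real.exp (-lam * u - x * Real.cosh u))
      ((x ^ 2 * Real.cosh u ^ 2 - x * Real.cosh u - x ^ 2 - lam ^ 2) *
        Real.exp (-lam * u - x * Real.cosh u)) u := by
  have h1 : HasDerivAt (fun u : ℝ => -lam * u - x * Real.cosh u)
      (-lam - x * Real.sinh u) u := by
    exact (((hasDerivAt_id u).const_mul (-lam)).sub
      ((Real.hasDerivAt_cosh u).const_mul x)).congr_deriv (by simp)
  have h2 := (Real.hasDerivAt_exp (-lam * u - x * Real.cosh u)).comp u h1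
  have h3 : HasDerivAt (fun u : ℝ => lam - x * Real.sinh u) (-(x * Real.cosh u)) u := by
    exact ((hasDerivAt_const u lam).sub ((Real.hasDerivAt_sinh u).const_mul x)).congr_deriv (by ring)
  have h4 := h3.mul h2
  refine h4.congr_deriv (Eq.symm ?_)
  have hs : Real.sinh u ^ 2 = Real.cosh u ^ 2 - 1 := by
    have := Real.cosh_sq u; linarith
  simp only [Function.comp_apply]
  linear_combination (-(x ^ 2 * Real.exp (-lam * u - x * Real.cosh u))) * hs

lemma F_bound (lam x : ℝ) (hx : 0 < x) (u : ℝ) :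
    |(lam - x * Real.sinh u) * Real.exp (-lam * u - x * Real.cosh u)|
      ≤ (|lam| + x) * Real.exp (2 * (|(1 + |lam|)| + 1) ^ 2 / x) * Real.exp (-|u|) := by
  have hc := Real.cosh_pos u
  have h1 : |lam - x * Real.sinh u| ≤ (|lam| + x) * Real.exp |u| := by
    calc |lam - x * Real.sinh u| ≤ |lam| + x * |Real.sinh u| := by
          refine (abs_sub _ _).trans ?_
          rw [abs_mul, abs_of_pos hx]
      _ ≤ |lam| + x * Real.exp |u| := by
          have := (abs_sinh_le_cosh u).trans (cosh_le_exp_abs u)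
          nlinarith
      _ ≤ (|lam| + x) * Real.exp |u| := by
          nlinarith [Real.one_le_exp (abs_nonneg u), abs_nonneg lam]
  have h2 : Real.exp (-lam * u - x * Real.cosh u)
      ≤ Real.exp (|lam| * |u| - x * Real.cosh u) := by
    apply Real.exp_le_exp.mpr
    have : -lam * u ≤ |lam| * |u| := by
      calc -lam * u ≤ |(-lam) * u| := le_abs_self _
        _ = |lam| * |u| := by rw [abs_mul, abs_neg]
    linarith
  have h3 : Real.exp |u| * Real.exp (|lam| * |u| - x * Real.cosh u)
      ≤ Real.exp (2 * (|(1 + |lam|)| + 1) ^ 2 / x) * Real.exp (-|u|) := by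
    rw [← Real.exp_add, ← Real.exp_add]
    apply Real.exp_le_exp.mpr
    have := key_bound x (1 + |lam|) hx u
    nlinarith [abs_nonneg u]
  calc |(lam - x * Real.sinh u) * Real.exp (-lam * u - x * Real.cosh u)|
      = |lam - x * Real.sinh u| * Real.exp (-lam * u - x * Real.cosh u) := by
        rw [abs_mul, abs_of_pos (Real.exp_pos _)]
    _ ≤ ((|lam| + x) * Real.exp |u|) * Real.exp (|lam| * |u| - x * Real.cosh u) := by
        apply mul_le_mul h1 h2 (Real.exp_pos _).le
        positivity
    _ = (|lam| + x) * (Real.exp |u| * Real.exp (|lam| * |u| - x * Real.cosh u)) := by ring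
    _ ≤ (|lam| + x) * (Real.exp (2 * (|(1 + |lam|)| + 1) ^ 2 / x) * Real.exp (-|u|)) := by
        apply mul_le_mul_of_nonneg_left h3 (by positivity)
    _ = (|lam| + x) * Real.exp (2 * (|(1 + |lam|)| + 1) ^ 2 / x) * Real.exp (-|u|) := by ring

lemma integrable_toda_integrand (lam x : ℝ) (hx : 0 < x) :
    Integrable (fun u : ℝ => (x ^ 2 * Real.cosh u ^ 2 - x * Real.cosh u - x ^ 2 - lam ^ 2) *
      Real.exp (-lam * u - x * Real.cosh u)) := by
  have e2 := (integrable_cosh_pow_exp x (-lam) hx 2).const_mul (x ^ 2)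
  have e1 := (integrable_cosh_pow_exp x (-lam) hx 1).const_mul x
  have e0 := (integrable_cosh_pow_exp x (-lam) hx 0).const_mul (x ^ 2 + lam ^ 2)
  refine ((e2.sub e1).sub e0).congr (Eventually.of_forall fun u => ?_)
  simp only [Pi.sub_apply, pow_zero, pow_one]
  ring

lemma tendsto_F_top (lam x : ℝ) (hx : 0 < x) :
    Tendsto (fun u => (lam - x * Real.sinh u) * Real.exp (-lam * u - x * Real.cosh u))
      atTop (nhds 0) := by
  apply squeeze_zero_norm (fun u => F_bound lam x hx u)
  have h := Real.tendsto_exp_neg_atTop_nhds_zero.comp tendsto_abs_atTop_atTop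
  have := h.const_mul ((|lam| + x) * Real.exp (2 * (|(1 + |lam|)| + 1) ^ 2 / x))
  simpa [mul_assoc] using this

lemma tendsto_F_bot (lam x : ℝ) (hx : 0 < x) :
    Tendsto (fun u => (lam - x * Real.sinh u) * Real.exp (-lam * u - x * Real.cosh u))
      atBot (nhds 0) := by
  apply squeeze_zero_norm (fun u => F_bound lam x hx u)
  have h := Real.tendsto_exp_neg_atTop_nhds_zero.comp tendsto_abs_atBot_atTop
  have := h.const_mul ((|lam| + x) * Real.exp (2 * (|(1 + |lam|)| + 1) ^ 2 / x))
  simpa [mul_assoc] using this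

lemma integral_toda_zero (lam x : ℝ) (hx : 0 < x) :
    (∫ u : ℝ, (x ^ 2 * Real.cosh u ^ 2 - x * Real.cosh u - x ^ 2 - lam ^ 2) *
      Real.exp (-lam * u - x * Real.cosh u)) = 0 := by
  have hint := integrable_toda_integrand lam x hx
  have hIoi := integral_Ioi_of_hasDerivAt_of_tendsto' (a := (0:ℝ))
    (fun u _ => toda_integrand_deriv lam x u) hint.integrableOn (tendsto_F_top lam x hx)
  have hIic := integral_Iic_of_hasDerivAt_of_tendsto' (a := (0:ℝ))
    (fun u _ => toda_integrand_deriv lam x u) hint.integrableOn (tendsto_F_bot lam x hx)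
  rw [← intervalIntegral.integral_Iic_add_Ioi (b := (0:ℝ)) hint.integrableOn hint.integrableOn,
    hIoi, hIic]
  ring

lemma J_identity (lam r : ℝ) :
    J2 lam r - Real.exp (-r) ^ 2 * J lam r = lam ^ 2 * J lam r := by
  set x := Real.exp (-r) with hxdef
  have hx : 0 < x := Real.exp_pos _
  have e0 := integrable_exp_cosh x (-lam) hx
  have h12 : Integrable (fun u : ℝ => (x ^ 2 * Real.cosh u ^ 2 - x * Real.cosh u) *
      Real.exp (-lam * u - x * Real.cosh u)) := by
    have := ((integrable_cosh_pow_exp x (-lam) hx 2).const_mul (x ^ 2)).sub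
      ((integrable_cosh_pow_exp x (-lam) hx 1).const_mul x)
    refine this.congr (Eventually.of_forall fun u => ?_)
    simp only [Pi.sub_apply, pow_one]
    ring
  have hzero := integral_toda_zero lam x hx
  have hsplit : (∫ u : ℝ, (x ^ 2 * Real.cosh u ^ 2 - x * Real.cosh u - x ^ 2 - lam ^ 2) *
      Real.exp (-lam * u - x * Real.cosh u))
      = J2 lam r - (x ^ 2 + lam ^ 2) * J lam r := by
    rw [J2, J, ← MeasureTheory.integral_const_mul,
      ← MeasureTheory.integral_sub h12 (e0.const_mul _)]
    exact integral_congr_ae (Eventually.of_forall fun u => by simp only [Pi.sub_apply]; ring)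
  rw [hsplit] at hzero
  linarith

/-! ### Change of variables -/

lemma macdonaldK_eq_J (lam r : ℝ) :
    macdonaldK lam (Real.exp (-r)) = (1 / 2) * J lam r := by
  set x := Real.exp (-r) with hxdef
  have hx : 0 < x := Real.exp_pos _
  have hc : 0 < x / 2 := by linarith
  have himg : Ioi (0 : ℝ) = (fun u : ℝ => x / 2 * Real.exp u) '' univ := by
    rw [image_univ]
    ext t
    simp only [mem_Ioi, mem_range]
    constructor
    · intro ht
      refine ⟨Real.log (t / (x / 2)), ?_⟩
      rw [Real.exp_log (by positivity)]
      field_simp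
    · rintro ⟨u, rfl⟩; positivity
  have hcv := integral_image_eq_integral_abs_deriv_smul (s := (univ : Set ℝ))
    (f := fun u : ℝ => x / 2 * Real.exp u) (f' := fun u : ℝ => x / 2 * Real.exp u)
    MeasurableSet.univ
    (fun u _ => (((Real.hasDerivAt_exp u).const_mul (x / 2))).hasDerivWithinAt)
    (fun a _ b _ h => Real.exp_injective (mul_left_cancel₀ (by positivity) h))
    (fun t => Real.exp (-t) * Real.exp (-x ^ 2 / (4 * t)) * t ^ (-1 - lam))
  rw [macdonaldK, himg, hcv]
  have hpt : ∀ u : ℝ,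
      |x / 2 * Real.exp u| • (Real.exp (-(x / 2 * Real.exp u)) *
        Real.exp (-x ^ 2 / (4 * (x / 2 * Real.exp u))) * (x / 2 * Real.exp u) ^ (-1 - lam))
      = (x / 2) ^ (-lam) * Real.exp (-lam * u - x * Real.cosh u) := by
    intro u
    have heu : 0 < Real.exp u := Real.exp_pos u
    rw [smul_eq_mul, abs_of_pos (by positivity)]
    have harg : -x ^ 2 / (4 * (x / 2 * Real.exp u)) = -(x / 2 * Real.exp (-u)) := by
      rw [Real.exp_neg]
      field_simp
      ring
    have hrpow : (x / 2 * Real.exp u) ^ (-1 - lam)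
        = (x / 2) ^ (-1 - lam) * Real.exp (u * (-1 - lam)) := by
      rw [Real.mul_rpow hc.le heu.le, ← Real.exp_mul]
    have hxcosh : x * Real.cosh u = x / 2 * Real.exp u + x / 2 * Real.exp (-u) := by
      rw [Real.cosh_eq]; ring
    rw [harg, hrpow]
    rw [hxcosh, Real.rpow_def_of_pos hc,
      show x / 2 = Real.exp (Real.log (x / 2)) from (Real.exp_log hc).symm, Real.log_exp]
    simp only [← Real.exp_mul, ← Real.exp_add]
    rw [Real.exp_eq_exp]
    ring
  rw [show (∫ u : ℝ in univ, |x / 2 * Real.exp u| • (Real.exp (-(x / 2 * Real.exp u)) *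
        Real.exp (-x ^ 2 / (4 * (x / 2 * Real.exp u))) * (x / 2 * Real.exp u) ^ (-1 - lam)))
      = ∫ u : ℝ, (x / 2) ^ (-lam) * Real.exp (-lam * u - x * Real.cosh u) by
    rw [Measure.restrict_univ]
    exact integral_congr_ae (Eventually.of_forall hpt)]
  rw [MeasureTheory.integral_const_mul]
  have h1 : (x / 2) ^ lam * (x / 2) ^ (-lam) = 1 := by
    rw [← Real.rpow_add hc]; simp
  rw [J]
  calc 1 / 2 * (x / 2) ^ lam * ((x / 2) ^ (-lam) *
        ∫ u : ℝ, Real.exp (-lam * u - x * Real.cosh u))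
      = ((x / 2) ^ lam * (x / 2) ^ (-lam)) * (1 / 2 *
        ∫ u : ℝ, Real.exp (-lam * u - x * Real.cosh u)) := by ring
    _ = 1 / 2 * ∫ u : ℝ, Real.exp (-lam * u - x * Real.cosh u) := by rw [h1]; ring

/-! ### Assembly -/

lemma main_eigen (lam r : ℝ) :
    iteratedDeriv 2 (fun s => macdonaldK lam (Real.exp (-s))) r
      - Real.exp (-2 * r) * macdonaldK lam (Real.exp (-r))
    = lam ^ 2 * macdonaldK lam (Real.exp (-r)) := by
  have hfun : (fun s => macdonaldK lam (Real.exp (-s))) = fun s => 1 / 2 * J lam s :=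
    funext fun s => macdonaldK_eq_J lam s
  have hd1 : ∀ s, HasDerivAt (fun s => 1 / 2 * J lam s) (1 / 2 * J1 lam s) s :=
    fun s => (hasDerivAt_J lam s).const_mul (1 / 2)
  have hderiv1 : deriv (fun s => 1 / 2 * J lam s) = fun s => 1 / 2 * J1 lam s :=
    funext fun s => (hd1 s).deriv
  have h2 : iteratedDeriv 2 (fun s => macdonaldK lam (Real.exp (-s))) r = 1 / 2 * J2 lam r := by
    rw [hfun, iteratedDeriv_succ, iteratedDeriv_one, hderiv1]
    exact ((hasDerivAt_J1 lam r).const_mul (1 / 2)).deriv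
  have hsq : Real.exp (-2 * r) = Real.exp (-r) ^ 2 := by
    rw [sq, ← Real.exp_add]; congr 1; ring
  rw [h2, macdonaldK_eq_J, hsq]
  have := J_identity lam r
  linarith

lemma macdonaldK_zero_pos (r : ℝ) : 0 < macdonaldK 0 (Real.exp (-r)) := by
  rw [macdonaldK_eq_J]
  have hint := integrable_J 0 r
  have hpos : 0 < J 0 r := by
    rw [J]
    refine (integral_pos_iff_support_of_nonneg_ae
      (Eventually.of_forall fun u => (Real.exp_pos _).le) hint).mpr ?_
    have hsupp : Function.support
        (fun u : ℝ => Real.exp (-0 * u - Real.exp (-r) * Real.cosh u)) = univ := by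
      ext u
      simp only [Function.mem_support, mem_univ, iff_true]
      exact (Real.exp_pos _).ne'
    rw [hsupp, Real.volume_univ]
    exact ENNReal.zero_lt_top
  linarith

/-- `r ↦ K_λ(e^{−r})` is a `λ²`-eigenfunction of the Toda Hamiltonian `d²/dr² − e^{−2r}`;
in particular `K₀(e^{−r})` is a positive ground state. -/
theorem macdonald_toda_eigenfunction (lam : ℝ) :
    (∀ r : ℝ,
      iteratedDeriv 2 (fun s => macdonaldK lam (Real.exp (-s))) r
          - Real.exp (-2 * r) * macdonaldK lam (Real.exp (-r))
        = lam ^ 2 * macdonaldK lam (Real.exp (-r))) ∧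
    (∀ r : ℝ,
      iteratedDeriv 2 (fun s => macdonaldK 0 (Real.exp (-s))) r
        = Real.exp (-2 * r) * macdonaldK 0 (Real.exp (-r))) ∧
    (∀ r : ℝ, 0 < macdonaldK 0 (Real.exp (-r))) := by
  refine ⟨fun r => main_eigen lam r, fun r => ?_, fun r => macdonaldK_zero_pos r⟩
  have h := main_eigen 0 r
  have : (0:ℝ) ^ 2 = 0 := by norm_num
  rw [this, zero_mul, sub_eq_zero] at h
  exact h

end
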